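/- Let 0 < ψ ≤ π/2, φ = ψ/π, θ > 0, and define h(x) = (θ sin ψ / π) · B_{sin²(πx/(2θ))}(φ, 1−φ) for 0 < x ≤ θ. Then h(x) ≤ θ^(1−2φ) · (sin ψ / ψ) · (π^(2φ)/4^φ) · x^(2φ) for all 0 < x ≤ θ. -/

import Mathlib

open Real MeasureTheory Set

/-- The incomplete Beta function `B_t(a,b) = ∫_0^t s^(a-1) (1-s)^(b-1) ds`. -/
noncomputable def incBeta (a b x : ℝ) : ℝ :=
  ∫ s in (0:ℝ)..x, s ^ (a - 1) * (1 - s) ^ (b - 1)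

/-! The substitution `s = sin² v` turns `B_{sin² u}(φ, 1 - φ)` into `∫_0^u 2 tan^(2φ-1) v dv`.
Since `tan v ≥ v` and `2φ - 1 ≤ 0`, the integrand is at most `2 v^(2φ-1)`, whose integral is
`u^(2φ)/φ`; with `u = πx/(2θ)` this is the claimed bound. The integrand is integrable on all of
`[0, 1]` (as `φ < 1`), so `u^(2φ)/φ - B_{sin² u}(φ, 1 - φ)` is continuous, hence monotone, on the
closed interval `[0, π/2]`. -/

open intervalIntegral

section IncBeta

variable {a b : ℝ}

lemma intervalIntegrable_incBeta_integrand (ha : 0 < a) (hb : 0 < b) :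
    IntervalIntegrable (fun s : ℝ => s ^ (a - 1) * (1 - s) ^ (b - 1)) volume 0 1 := by
  have hleft : IntervalIntegrable (fun s : ℝ => s ^ (a - 1) * (1 - s) ^ (b - 1))
      volume 0 (1 / 2) := by
    refine (intervalIntegrable_rpow' (by linarith)).mul_continuousOn ?_
    refine (continuousOn_const.sub continuousOn_id).rpow_const fun s hs => Or.inl ?_
    rw [uIcc_of_le (by norm_num)] at hs
    change (1 : ℝ) - s ≠ 0
    linarith [hs.2]
  have hright : IntervalIntegrable (fun s : ℝ => s ^ (a - 1) * (1 - s) ^ (b - 1))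
      volume (1 / 2) 1 := by
    have h : IntervalIntegrable (fun s : ℝ => (1 - s) ^ (b - 1)) volume (1 / 2) 1 := by
      convert (intervalIntegrable_rpow' (r := b - 1) (a := 1 / 2) (b := 0)
        (by linarith)).comp_sub_left 1 using 1 <;> norm_num
    refine h.continuousOn_mul (continuousOn_id.rpow_const fun s hs => Or.inl ?_)
    rw [uIcc_of_le (by norm_num)] at hs
    change s ≠ 0
    linarith [hs.1]
  exact hleft.trans hright

lemma continuousOn_incBeta (ha : 0 < a) (hb : 0 < b) : ContinuousOn (incBeta a b) (Icc 0 1) := by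
  have h := continuousOn_primitive_interval' (intervalIntegrable_incBeta_integrand ha hb)
    left_mem_uIcc
  rwa [uIcc_of_le zero_le_one] at h

lemma hasDerivAt_incBeta (ha : 0 < a) (hb : 0 < b) {x : ℝ} (hx0 : 0 < x) (hx1 : x < 1) :
    HasDerivAt (incBeta a b) (x ^ (a - 1) * (1 - x) ^ (b - 1)) x := by
  have hint := (intervalIntegrable_incBeta_integrand ha hb).mono_set (c := 0) (d := x)
    (by rw [uIcc_of_le hx0.le, uIcc_of_le zero_le_one]; exact Icc_subset_Icc le_rfl hx1.le)
  refine integral_hasDerivAt_right hint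
    (Measurable.aestronglyMeasurable (by fun_prop)).stronglyMeasurableAtFilter ?_
  exact (continuousAt_id.rpow_const (Or.inl hx0.ne')).mul
    ((continuousAt_const.sub continuousAt_id).rpow_const (Or.inl (sub_pos.2 hx1).ne'))

lemma sq_rpow_mul_sq_rpow_mul_eq {s c : ℝ} (hs : 0 < s) (hc : 0 < c) (a : ℝ) :
    (s ^ 2) ^ (a - 1) * (c ^ 2) ^ (1 - a - 1) * (2 * s * c) = 2 * (s / c) ^ (2 * a - 1) := by
  rw [← rpow_natCast s 2, ← rpow_natCast c 2, ← rpow_mul hs.le, ← rpow_mul hc.le]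
  rw [show (2 : ℕ) * (a - 1) = (2 * a - 1) - 1 by push_cast; ring,
    show (2 : ℕ) * (1 - a - 1) = -(2 * a - 1) - 1 by push_cast; ring,
    rpow_sub_one hs.ne', rpow_sub_one hc.ne', rpow_neg hc.le, div_rpow hs.le hc.le]
  field_simp

lemma hasDerivAt_incBeta_sin_sq (ha : 0 < a) (ha1 : a < 1) {v : ℝ} (hv0 : 0 < v)
    (hv1 : v < π / 2) :
    HasDerivAt (fun v => incBeta a (1 - a) (sin v ^ 2)) (2 * tan v ^ (2 * a - 1)) v := by
  have hs : 0 < sin v := sin_pos_of_pos_of_lt_pi hv0 (by linarith [pi_pos])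
  have hc : 0 < cos v := cos_pos_of_mem_Ioo ⟨by linarith, hv1⟩
  have hs1 : sin v ^ 2 < 1 := by nlinarith [sin_sq_add_cos_sq v]
  refine ((hasDerivAt_incBeta (b := 1 - a) ha (by linarith) (by positivity) hs1).comp v
    ((hasDerivAt_sin v).pow 2)).congr_deriv ?_
  rw [← cos_sq', tan_eq_sin_div_cos, ← sq_rpow_mul_sq_rpow_mul_eq hs hc]
  ring

lemma incBeta_sin_sq_le (ha : 0 < a) (ha' : a ≤ 1 / 2) {u : ℝ} (hu0 : 0 ≤ u) (hu : u ≤ π / 2) :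
    incBeta a (1 - a) (sin u ^ 2) ≤ u ^ (2 * a) / a := by
  set F : ℝ → ℝ := fun v => v ^ (2 * a) / a - incBeta a (1 - a) (sin v ^ 2) with hF
  have hcont : ContinuousOn F (Icc 0 (π / 2)) := by
    refine ContinuousOn.sub ?_ ?_
    · exact (continuousOn_id.rpow_const fun _ _ => Or.inr (by positivity)).div_const a
    · exact (continuousOn_incBeta ha (by linarith)).comp (by fun_prop)
        fun v _ => ⟨sq_nonneg _, sin_sq_le_one v⟩
  have hderiv : ∀ v ∈ interior (Icc 0 (π / 2)),
      HasDerivWithinAt F (2 * v ^ (2 * a - 1) - 2 * tan v ^ (2 * a - 1))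
        (interior (Icc 0 (π / 2))) v := by
    rw [interior_Icc]
    intro v hv
    have hpow : HasDerivAt (fun v : ℝ => v ^ (2 * a) / a) (2 * v ^ (2 * a - 1)) v := by
      refine ((hasDerivAt_rpow_const (Or.inl hv.1.ne')).div_const a).congr_deriv ?_
      rw [mul_comm 2 a, mul_assoc, mul_div_cancel_left₀ _ ha.ne']
    exact (hpow.sub (hasDerivAt_incBeta_sin_sq ha (by linarith) hv.1 hv.2)).hasDerivWithinAt
  have hderiv_nonneg : ∀ v ∈ interior (Icc 0 (π / 2)),
      0 ≤ 2 * v ^ (2 * a - 1) - 2 * tan v ^ (2 * a - 1) := by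
    rw [interior_Icc]
    intro v hv
    have := rpow_le_rpow_of_nonpos hv.1 (le_tan hv.1.le hv.2) (by linarith : 2 * a - 1 ≤ 0)
    linarith
  have hmono := monotoneOn_of_hasDerivWithinAt_nonneg (convex_Icc _ _) hcont hderiv
    hderiv_nonneg
  have hF0 : F 0 = 0 := by simp [hF, incBeta, zero_rpow (by positivity : 2 * a ≠ 0)]
  have h := hmono ⟨le_rfl, by positivity⟩ ⟨hu0, hu⟩ hu0
  rw [hF0] at h
  exact sub_nonneg.1 h

end IncBeta

theorem h_upper_bound (ψ θ : ℝ) (hψ : 0 < ψ) (hψ' : ψ ≤ Real.pi / 2) (hθ : 0 < θ)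
    (φ : ℝ) (hφ : φ = ψ / Real.pi) (x : ℝ) (hx : 0 < x) (hx' : x ≤ θ) :
    θ * Real.sin ψ / Real.pi *
        incBeta φ (1 - φ) (Real.sin (Real.pi * x / (2 * θ)) ^ 2) ≤
      θ ^ (1 - 2 * φ) * (Real.sin ψ / ψ) * (Real.pi ^ (2 * φ) / 4 ^ φ) * x ^ (2 * φ) := by
  have hφ0 : 0 < φ := by rw [hφ]; positivity
  have hφ1 : φ ≤ 1 / 2 := by rw [hφ, div_le_iff₀ pi_pos]; linarith
  have hu : π * x / (2 * θ) ≤ π / 2 := by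
    rw [div_le_div_iff₀ (by positivity) two_pos]; nlinarith [pi_pos]
  have hsinψ : 0 < sin ψ := sin_pos_of_pos_of_lt_pi hψ (by linarith [pi_pos])
  calc θ * sin ψ / π * incBeta φ (1 - φ) (sin (π * x / (2 * θ)) ^ 2)
      ≤ θ * sin ψ / π * ((π * x / (2 * θ)) ^ (2 * φ) / φ) := by
        gcongr
        exact incBeta_sin_sq_le hφ0 hφ1 (by positivity) hu
    _ = θ ^ (1 - 2 * φ) * (sin ψ / ψ) * (π ^ (2 * φ) / 4 ^ φ) * x ^ (2 * φ) := by
        have h4 : (2 : ℝ) ^ (2 * φ) = 4 ^ φ := by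
          rw [rpow_mul zero_le_two]; norm_num
        rw [div_rpow (by positivity) (by positivity), mul_rpow pi_pos.le hx.le,
          mul_rpow zero_le_two hθ.le, h4, rpow_sub hθ, rpow_one,
          show ψ = π * φ by rw [hφ]; field_simp]
        field_simp
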